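/- The type I exceptional Laguerre polynomial L^I_{k,n,m}(x) = ξ_{k,m}(x)·L_{n-m}^{k-1}(x) + ξ_{k-1,m}(x)·L_{n-m-1}^{k}(x) satisfies the second-order equation x·y'' + (k+1-x)·y' + m·y - 2·(ξ_{k-1,m}'/ξ_{k-1,m})·(x·y' + k·y) = (m-n)·y, for n ≥ m, at all points where ξ_{k-1,m}(x) ≠ 0. -/

import Mathlib

/-- Associated Laguerre polynomial L_n^k(x). -/
noncomputable def lag (n : ℕ) (k : ℝ) (x : ℝ) : ℝ :=
  ∑ i ∈ Finset.range (n + 1),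
    (-1 : ℝ) ^ i * (∏ j ∈ Finset.range (n - i), (k + (i : ℝ) + 1 + (j : ℝ))) /
      (Nat.factorial (n - i) : ℝ) * x ^ i / (Nat.factorial i : ℝ)

/-- Laguerre polynomial with integer index, zero for negative index. -/
noncomputable def lagZ (j : ℤ) (k : ℝ) (x : ℝ) : ℝ :=
  if 0 ≤ j then lag j.toNat k x else 0

/-- xi_{k,m}(x) = L_m^k(-x). -/
noncomputable def xi (k : ℝ) (m : ℕ) (x : ℝ) : ℝ := lag m k (-x)

/-- eta_{k,m}(x) = L_m^{-k}(x). -/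
noncomputable def eta (k : ℝ) (m : ℕ) (x : ℝ) : ℝ := lag m (-k) x

/-!
Write `y = u A + v B` with `u = ξ_{k,m}`, `v = ξ_{k-1,m}`, `A = L^{k-1}_{n-m}`, `B = L^k_{n-m-1}`.
Each factor satisfies its Laguerre equation `x L'' + (k + 1 - x) L' + j L = 0` (reflected `x ↦ -x` for
`ξ`), and the factors are linked by `A' = -B`, `v' = u - v` and `x u' = m u - (m + k) v'`. These follow
from the classical identities `(L^k_j)' = -L^{k+1}_{j-1}`, `L^k_j = L^{k+1}_j - L^{k+1}_{j-1}` and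
`x L^{k+1}_{j-1} = (j + k) L^k_{j-1} - j L^k_j`, which are read off the explicit coefficients. Expanding
the operator on `y` by the Leibniz rule and eliminating the second derivatives with the four Laguerre
equations, the remaining terms cancel by the three linking relations. Indexing the degree by integers,
with `L_j = 0` for `j < 0`, makes every identity hold uniformly, including the cases `m = 0` and `n = m`.
-/

open Finset Nat

noncomputable def lagCoeff (n : ℕ) (k : ℝ) (i : ℕ) : ℝ :=
  (-1) ^ i * (∏ j ∈ range (n - i), (k + i + 1 + j)) / ((n - i)! * i !)

lemma lag_eq_sum (n : ℕ) (k x : ℝ) : lag n k x = ∑ i ∈ range (n + 1), lagCoeff n k i * x ^ i := by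
  refine sum_congr rfl fun i _ => ?_
  rw [lagCoeff]
  field_simp

lemma lagCoeff_self (n : ℕ) (k : ℝ) : lagCoeff n k n = (-1) ^ n / n ! := by
  simp [lagCoeff]

lemma succ_mul_lagCoeff_succ (n i : ℕ) (k : ℝ) :
    (i + 1) * lagCoeff (n + 1) k (i + 1) = -lagCoeff n (k + 1) i := by
  rw [lagCoeff, lagCoeff, Nat.add_sub_add_right, factorial_succ]
  push_cast
  field_simp
  ring_nf

lemma lagCoeff_succ_eq_sub {n i : ℕ} (h : i ≤ n) (k : ℝ) :
    lagCoeff (n + 1) k i = lagCoeff (n + 1) (k + 1) i - lagCoeff n (k + 1) i := by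
  obtain ⟨q, rfl⟩ := Nat.exists_eq_add_of_le h
  rw [lagCoeff, lagCoeff, lagCoeff, show i + q + 1 - i = q + 1 by omega,
    show i + q - i = q by omega, prod_range_succ', prod_range_succ, factorial_succ]
  push_cast
  field_simp
  ring_nf

lemma sub_mul_lagCoeff_succ {n i : ℕ} (h : i ≤ n) (k : ℝ) :
    ((n : ℝ) + 1 - i) * lagCoeff (n + 1) k i = (n + 1 + k) * lagCoeff n k i := by
  obtain ⟨q, rfl⟩ := Nat.exists_eq_add_of_le h
  rw [lagCoeff, lagCoeff, show i + q + 1 - i = q + 1 by omega,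
    show i + q - i = q by omega, prod_range_succ, factorial_succ]
  push_cast
  field_simp
  ring_nf

lemma hasDerivAt_lag_succ (n : ℕ) (k x : ℝ) :
    HasDerivAt (lag (n + 1) k) (-lag n (k + 1) x) x := by
  have h := HasDerivAt.fun_sum (u := range (n + 1 + 1)) fun i _ =>
    (hasDerivAt_pow i x).const_mul (lagCoeff (n + 1) k i)
  simp only [← lag_eq_sum] at h
  refine h.congr_deriv ?_
  rw [sum_range_succ', lag_eq_sum, ← sum_neg_distrib]
  simp only [CharP.cast_eq_zero, zero_mul, mul_zero, add_zero, Nat.add_sub_cancel]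
  refine sum_congr rfl fun i _ => ?_
  push_cast
  linear_combination x ^ i * succ_mul_lagCoeff_succ n i k

lemma lag_succ_eq_sub (n : ℕ) (k x : ℝ) :
    lag (n + 1) k x = lag (n + 1) (k + 1) x - lag n (k + 1) x := by
  rw [lag_eq_sum, lag_eq_sum, lag_eq_sum, sum_range_succ, sum_range_succ _ (n + 1),
    lagCoeff_self, lagCoeff_self, ← sub_add_eq_add_sub, ← sum_sub_distrib]
  congr 1
  refine sum_congr rfl fun i hi => ?_
  rw [lagCoeff_succ_eq_sub (Nat.lt_succ_iff.mp (mem_range.mp hi))]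
  ring

lemma mul_lag (n : ℕ) (k x : ℝ) :
    x * lag n (k + 1) x = (n + 1 + k) * lag n k x - (n + 1) * lag (n + 1) k x := by
  have hx : x * lag n (k + 1) x = -∑ i ∈ range (n + 1 + 1), i * lagCoeff (n + 1) k i * x ^ i := by
    rw [sum_range_succ', lag_eq_sum, mul_sum]
    simp only [CharP.cast_eq_zero, zero_mul, add_zero, ← sum_neg_distrib]
    refine sum_congr rfl fun i _ => ?_
    push_cast
    linear_combination x ^ (i + 1) * succ_mul_lagCoeff_succ n i k
  have hcoeff : (n + 1 + k) * ∑ i ∈ range (n + 1), lagCoeff n k i * x ^ i =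
      (n + 1) * ∑ i ∈ range (n + 1), lagCoeff (n + 1) k i * x ^ i -
        ∑ i ∈ range (n + 1), i * lagCoeff (n + 1) k i * x ^ i := by
    rw [mul_sum, mul_sum, ← sum_sub_distrib]
    refine sum_congr rfl fun i hi => ?_
    rw [← mul_assoc, ← sub_mul_lagCoeff_succ (Nat.lt_succ_iff.mp (mem_range.mp hi))]
    ring
  rw [hx, lag_eq_sum, lag_eq_sum, sum_range_succ _ (n + 1), sum_range_succ _ (n + 1)]
  push_cast
  linear_combination -hcoeff

@[simp]
lemma lagZ_natCast (n : ℕ) (k x : ℝ) : lagZ n k x = lag n k x := by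
  simp [lagZ]

lemma lagZ_of_neg {j : ℤ} (hj : j < 0) (k x : ℝ) : lagZ j k x = 0 := by
  simp [lagZ, hj]

@[simp]
lemma lagZ_zero (k x : ℝ) : lagZ 0 k x = 1 := by
  simp [lagZ, lag]

@[simp]
lemma lagZ_natCast_add_one (n : ℕ) (k x : ℝ) : lagZ (n + 1) k x = lag (n + 1) k x := by
  exact_mod_cast lagZ_natCast (n + 1) k x

@[simp]
lemma lagZ_neg_one (k x : ℝ) : lagZ (-1) k x = 0 :=
  lagZ_of_neg (by norm_num) k x

lemma lagZ_negSucc (n : ℕ) (k : ℝ) : lagZ (Int.negSucc n) k = 0 :=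
  funext fun x => lagZ_of_neg (Int.negSucc_lt_zero n) k x

lemma hasDerivAt_lagZ (j : ℤ) (k x : ℝ) :
    HasDerivAt (lagZ j k) (-lagZ (j - 1) (k + 1) x) x := by
  rcases j with (_ | n) | n
  · have : lagZ 0 k = fun _ => 1 := funext (lagZ_zero k)
    simpa [this] using hasDerivAt_const x (1 : ℝ)
  · have : lagZ (n + 1) k = lag (n + 1) k := funext (lagZ_natCast_add_one n k)
    simpa [this] using hasDerivAt_lag_succ n k x
  · rw [lagZ_negSucc, lagZ_of_neg (by omega), neg_zero]
    exact hasDerivAt_const x 0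

lemma lagZ_eq_sub (j : ℤ) (k x : ℝ) :
    lagZ j k x = lagZ j (k + 1) x - lagZ (j - 1) (k + 1) x := by
  rcases j with (_ | n) | n
  · simp
  · simpa using lag_succ_eq_sub n k x
  · simp [lagZ_negSucc]

lemma mul_lagZ (j : ℤ) (k x : ℝ) :
    x * lagZ (j - 1) (k + 1) x = (j + k) * lagZ (j - 1) k x - j * lagZ j k x := by
  rcases j with (_ | n) | n
  · simp
  · simpa [add_assoc, add_comm 1 k] using mul_lag n k x
  · simp [lagZ_negSucc]

lemma deriv_lagZ (j : ℤ) (k : ℝ) : deriv (lagZ j k) = fun x => -lagZ (j - 1) (k + 1) x :=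
  funext fun x => (hasDerivAt_lagZ j k x).deriv

@[fun_prop]
lemma differentiable_lagZ (j : ℤ) (k : ℝ) : Differentiable ℝ (lagZ j k) :=
  fun x => (hasDerivAt_lagZ j k x).differentiableAt

@[fun_prop]
lemma contDiff_lagZ (j : ℤ) (k : ℝ) {n : WithTop ℕ∞} : ContDiff ℝ n (lagZ j k) := by
  unfold lagZ lag
  split_ifs <;> fun_prop

lemma lagZ_ode (j : ℤ) (k x : ℝ) :
    x * deriv (deriv (lagZ j k)) x + (k + 1 - x) * deriv (lagZ j k) x + j * lagZ j k x = 0 := by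
  have h2 : deriv (deriv (lagZ j k)) x = lagZ (j - 1 - 1) (k + 1 + 1) x := by
    rw [deriv_lagZ, deriv.fun_neg, deriv_lagZ, neg_neg]
  rw [h2, deriv_lagZ]
  have := mul_lagZ (j - 1) (k + 1) x
  push_cast at this
  linear_combination this + mul_lagZ j k x + (j + k) * lagZ_eq_sub (j - 1) k x

lemma xi_eq_lagZ (k : ℝ) (m : ℕ) : xi k m = fun x => lagZ m k (-x) :=
  funext fun x => (lagZ_natCast m k (-x)).symm

@[fun_prop]
lemma contDiff_xi (k : ℝ) (m : ℕ) {n : WithTop ℕ∞} : ContDiff ℝ n (xi k m) := by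
  rw [xi_eq_lagZ]
  exact (contDiff_lagZ m k).comp contDiff_neg

@[fun_prop]
lemma differentiable_xi (k : ℝ) (m : ℕ) : Differentiable ℝ (xi k m) :=
  (contDiff_xi k m (n := 1)).differentiable one_ne_zero

lemma deriv_xi (k : ℝ) (m : ℕ) (x : ℝ) : deriv (xi k m) x = lagZ (m - 1) (k + 1) (-x) := by
  rw [xi_eq_lagZ, deriv_comp_neg, deriv_lagZ, neg_neg]

lemma deriv_deriv_comp_neg {𝕜 F : Type*} [NontriviallyNormedField 𝕜] [NormedAddCommGroup F]
    [NormedSpace 𝕜 F] (f : 𝕜 → F) (x : 𝕜) :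
    deriv (deriv fun t => f (-t)) x = deriv (deriv f) (-x) := by
  have h : deriv (fun t => f (-t)) = fun t => -deriv f (-t) := funext (deriv_comp_neg f)
  rw [h, deriv.fun_neg, deriv_comp_neg, neg_neg]

lemma xi_ode (k : ℝ) (m : ℕ) (x : ℝ) :
    x * deriv (deriv (xi k m)) x + (k + 1 + x) * deriv (xi k m) x - m * xi k m x = 0 := by
  have := lagZ_ode m k (-x)
  rw [xi_eq_lagZ, deriv_deriv_comp_neg, deriv_comp_neg]
  push_cast at this
  linear_combination -this

lemma deriv_xi_eq_sub (k : ℝ) (m : ℕ) (x : ℝ) : deriv (xi k m) x = xi (k + 1) m x - xi k m x := by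
  rw [deriv_xi, xi_eq_lagZ, xi_eq_lagZ]
  linear_combination lagZ_eq_sub m k (-x)

lemma mul_deriv_xi (k : ℝ) (m : ℕ) (x : ℝ) :
    x * deriv (xi k m) x = m * xi k m x - (m + k) * deriv (xi (k - 1) m) x := by
  rw [deriv_xi, deriv_xi, sub_add_cancel, xi_eq_lagZ]
  linear_combination -mul_lagZ m k (-x)

section SecondDerivative

variable {𝕜 : Type*} [NontriviallyNormedField 𝕜] {f g : 𝕜 → 𝕜}

lemma deriv_deriv_fun_add (hf : ContDiff 𝕜 2 f) (hg : ContDiff 𝕜 2 g) (x : 𝕜) :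
    deriv (deriv fun t => f t + g t) x = deriv (deriv f) x + deriv (deriv g) x := by
  have h : deriv (fun t => f t + g t) = fun t => deriv f t + deriv g t :=
    funext fun t => deriv_fun_add (hf.differentiable two_ne_zero t) (hg.differentiable two_ne_zero t)
  rw [h, deriv_fun_add (hf.differentiable_deriv_two x) (hg.differentiable_deriv_two x)]

lemma deriv_deriv_fun_mul (hf : ContDiff 𝕜 2 f) (hg : ContDiff 𝕜 2 g) (x : 𝕜) :
    deriv (deriv fun t => f t * g t) x =
      deriv (deriv f) x * g x + 2 * (deriv f x * deriv g x) + f x * deriv (deriv g) x := by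
  have hf1 := hf.differentiable two_ne_zero
  have hg1 := hg.differentiable two_ne_zero
  have h : deriv (fun t => f t * g t) = fun t => deriv f t * g t + f t * deriv g t :=
    funext fun t => deriv_fun_mul (hf1 t) (hg1 t)
  rw [h, deriv_fun_add ((hf.differentiable_deriv_two x).fun_mul (hg1 x))
      ((hf1 x).fun_mul (hg.differentiable_deriv_two x)),
    deriv_fun_mul (hf.differentiable_deriv_two x) (hg1 x),
    deriv_fun_mul (hf1 x) (hg.differentiable_deriv_two x)]
  ring

end SecondDerivative

-- Values and first and second derivatives (subscripts) of `u, v, A, B` at `x`.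
lemma xLaguerreI_jet_identity {x k m N u u₁ u₂ v v₁ v₂ A A₁ A₂ B B₁ B₂ : ℝ} (hv : v ≠ 0)
    (hu_ode : x * u₂ + (k + 1 + x) * u₁ - m * u = 0)
    (hv_ode : x * v₂ + (k + x) * v₁ - m * v = 0)
    (hA_ode : x * A₂ + (k - x) * A₁ + N * A = 0)
    (hB_ode : x * B₂ + (k + 1 - x) * B₁ + (N - 1) * B = 0)
    (hA₁ : A₁ = -B) (hv₁ : v₁ = u - v) (hu₁ : x * u₁ = m * u - (m + k) * v₁) :
    x * (u₂ * A + 2 * (u₁ * A₁) + u * A₂ + (v₂ * B + 2 * (v₁ * B₁) + v * B₂)) +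
        (k + 1 - x) * (u₁ * A + u * A₁ + (v₁ * B + v * B₁)) + m * (u * A + v * B) -
        2 * (v₁ / v) * (x * (u₁ * A + u * A₁ + (v₁ * B + v * B₁)) + k * (u * A + v * B)) =
      -N * (u * A + v * B) := by
  subst hA₁ hv₁
  field_simp
  linear_combination v * A * hu_ode + v * B * hv_ode + u * v * hA_ode + v * v * hB_ode -
    2 * (u * A + v * B) * hu₁

/-- The type I exceptional Laguerre polynomial satisfies the second-order
equation of the operator L^I_{k,m}, with eigenvalue m - n. -/
theorem XLaguerreI_eigenvalue_equation (k : ℝ) (m n : ℕ) (hnm : m ≤ n) (x : ℝ)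
    (hx : xi (k - 1) m x ≠ 0) :
    (fun f : ℝ → ℝ =>
      x * deriv (deriv f) x + (k + 1 - x) * deriv f x + (m : ℝ) * f x -
        2 * (deriv (xi (k - 1) m) x / xi (k - 1) m x) * (x * deriv f x + k * f x))
      (fun t => xi k m t * lag (n - m) (k - 1) t +
        xi (k - 1) m t * lagZ ((n : ℤ) - (m : ℤ) - 1) k t)
      = ((m : ℝ) - (n : ℝ)) *
        (xi k m x * lag (n - m) (k - 1) x +
          xi (k - 1) m x * lagZ ((n : ℤ) - (m : ℤ) - 1) k x) := by
  have hA : lag (n - m) (k - 1) = lagZ ((n : ℤ) - m) (k - 1) := by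
    rw [← Nat.cast_sub hnm]
    exact funext fun t => (lagZ_natCast _ _ t).symm
  have hv_ode := xi_ode (k - 1) m x
  have hv₁ := deriv_xi_eq_sub (k - 1) m x
  have hA_ode := lagZ_ode ((n : ℤ) - m) (k - 1) x
  have hB_ode := lagZ_ode ((n : ℤ) - m - 1) k x
  have hA₁ := deriv_lagZ ((n : ℤ) - m) (k - 1)
  push_cast at hA_ode hB_ode
  simp only [sub_add_cancel] at hv_ode hv₁ hA_ode hA₁
  have key := xLaguerreI_jet_identity hx (xi_ode k m x) hv_ode hA_ode hB_ode (congrFun hA₁ x) hv₁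
    (mul_deriv_xi k m x)
  rw [hA]
  beta_reduce
  rw [deriv_deriv_fun_add (by fun_prop) (by fun_prop), deriv_deriv_fun_mul (by fun_prop) (by fun_prop),
    deriv_deriv_fun_mul (by fun_prop) (by fun_prop), deriv_fun_add (by fun_prop) (by fun_prop),
    deriv_fun_mul (by fun_prop) (by fun_prop), deriv_fun_mul (by fun_prop) (by fun_prop)]
  linear_combination key
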